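/- arXiv:2301.05049 — 2 statements merged into one kernel-verified Lean document; each statement's English description precedes it below -/
import Mathlib

section
/- Let T be a 1.5D terrain given by a continuous function f : ℝ → ℝ, let p_i, p_j be points on T with y(p_i) < y(p_j), and let T' be a connected portion of T (points with x-coordinate in an interval I). Suppose x(p_i) < x for all x ∈ I (p_i is to the left of T') and every point of T' is visible from p_i. Then the perpendicular bisector of p_i and p_j intersects T' in at most one point. -/
/-- Euclidean distance between two points of `ℝ × ℝ`. -/
noncomputable def edist2 (p q : ℝ × ℝ) : ℝ :=
  Real.sqrt ((p.1 - q.1) ^ 2 + (p.2 - q.2) ^ 2)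

/-- `p` sees `q` over the terrain given by `f`: every point of the segment
`[p, q]` lies weakly above the graph of `f`. -/
def sees (f : ℝ → ℝ) (p q : ℝ × ℝ) : Prop :=
  ∀ t : ℝ, t ∈ Set.Icc (0 : ℝ) 1 →
    (1 - t) * p.2 + t * q.2 ≥ f ((1 - t) * p.1 + t * q.1)

/-! If `p` sees the terrain points `q₁ = (x₁, f x₁)` and `q₂ = (x₂, f x₂)` with `p.1 < x₁ < x₂`,
then `q₁` lies weakly below the chord `[p, q₂]`, so the cross product `(q₂ - p) × (q₁ - p)` is
`≤ 0`. If both lie on the bisector of `p` and `p'`, then `⟪q - p, p' - p⟫ = ‖p' - p‖² / 2 > 0`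
for `q = q₁, q₂`, so `q₂ - q₁` is orthogonal to `p' - p`; as `p'` is higher than `p`, moving
right along this line turns counterclockwise as seen from `p`, i.e. the cross product is
`> 0`. -/

theorem edist2_eq_edist2_iff {q p p' : ℝ × ℝ} :
    edist2 q p = edist2 q p' ↔
      2 * ((q.1 - p.1) * (p'.1 - p.1) + (q.2 - p.2) * (p'.2 - p.2)) =
        (p'.1 - p.1) ^ 2 + (p'.2 - p.2) ^ 2 := by
  rw [edist2, edist2, Real.sqrt_inj (by positivity) (by positivity)]
  constructor <;> intro h <;> linear_combination h

theorem cross_pos_of_dot_eq {u v d : ℝ × ℝ} {c : ℝ} (hc : 0 < c) (hd : 0 < d.2)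
    (huv : u.1 < v.1) (hu : u.1 * d.1 + u.2 * d.2 = c) (hv : v.1 * d.1 + v.2 * d.2 = c) :
    0 < v.1 * u.2 - v.2 * u.1 := by
  have key : d.2 * (v.1 * u.2 - v.2 * u.1) = (v.1 - u.1) * c := by
    linear_combination (v.1 - u.1) * hu - u.1 * (hv - hu)
  exact pos_of_mul_pos_right (key ▸ mul_pos (sub_pos.2 huv) hc) hd.le

theorem sees.graph_le_chord {f : ℝ → ℝ} {p q : ℝ × ℝ} {x : ℝ} (h : sees f p q)
    (hpq : p.1 < q.1) (hx : x ∈ Set.Icc p.1 q.1) :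
    (q.1 - p.1) * (f x - p.2) ≤ (x - p.1) * (q.2 - p.2) := by
  have hlen : 0 < q.1 - p.1 := sub_pos.2 hpq
  set t := (x - p.1) / (q.1 - p.1)
  have ht : t ∈ Set.Icc (0 : ℝ) 1 :=
    ⟨div_nonneg (by linarith [hx.1]) hlen.le, (div_le_one hlen).2 (by linarith [hx.2])⟩
  have hxt : (1 - t) * p.1 + t * q.1 = x := by
    simp only [t]; field_simp; ring
  have hchord := h t ht
  rw [hxt] at hchord
  have htlen : t * (q.1 - p.1) = x - p.1 := div_mul_cancel₀ _ hlen.ne'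
  calc (q.1 - p.1) * (f x - p.2)
      ≤ (q.1 - p.1) * ((1 - t) * p.2 + t * q.2 - p.2) := by gcongr
    _ = (x - p.1) * (q.2 - p.2) := by rw [← htlen]; ring

theorem not_lt_of_sees_of_edist2_eq {f : ℝ → ℝ} {p p' : ℝ × ℝ} {x₁ x₂ : ℝ} (hp : p.2 < p'.2)
    (hx₁ : p.1 < x₁) (hvis : sees f p (x₂, f x₂))
    (h₁ : edist2 (x₁, f x₁) p = edist2 (x₁, f x₁) p')
    (h₂ : edist2 (x₂, f x₂) p = edist2 (x₂, f x₂) p') :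
    ¬ x₁ < x₂ := by
  intro h₁₂
  have hchord := hvis.graph_le_chord (hx₁.trans h₁₂) ⟨hx₁.le, h₁₂.le⟩
  have hcross := cross_pos_of_dot_eq (u := (x₁ - p.1, f x₁ - p.2)) (v := (x₂ - p.1, f x₂ - p.2))
    (d := p' - p) (c := ((p'.1 - p.1) ^ 2 + (p'.2 - p.2) ^ 2) / 2)
    (by positivity) (sub_pos.2 hp) (by simpa using h₁₂)
    (by simp only [Prod.fst_sub, Prod.snd_sub]; linarith [edist2_eq_edist2_iff.1 h₁])
    (by simp only [Prod.fst_sub, Prod.snd_sub]; linarith [edist2_eq_edist2_iff.1 h₂])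
  dsimp only at hcross hchord
  linarith

theorem bisector_single_crossing_general (f : ℝ → ℝ)
    (xi xj : ℝ) (hy : f xi < f xj)
    (I : Set ℝ)
    (hleft : ∀ x ∈ I, xi < x)
    (hvis : ∀ x ∈ I, sees f (xi, f xi) (x, f x)) :
    Set.Subsingleton {q : ℝ × ℝ | q.1 ∈ I ∧ q.2 = f q.1 ∧
      edist2 q (xi, f xi) = edist2 q (xj, f xj)} := by
  rintro ⟨x₁, y₁⟩ ⟨hx₁ : x₁ ∈ I, hy₁ : y₁ = f x₁, h₁⟩
    ⟨x₂, y₂⟩ ⟨hx₂ : x₂ ∈ I, hy₂ : y₂ = f x₂, h₂⟩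
  subst hy₁ hy₂
  have hle : ∀ {a b}, a ∈ I → b ∈ I →
      edist2 (a, f a) (xi, f xi) = edist2 (a, f a) (xj, f xj) →
      edist2 (b, f b) (xi, f xi) = edist2 (b, f b) (xj, f xj) → b ≤ a :=
    fun ha hb ea eb ↦ not_lt.1 (not_lt_of_sees_of_edist2_eq hy (hleft _ ha) (hvis _ hb) ea eb)
  rw [le_antisymm (hle hx₂ hx₁ h₂ h₁) (hle hx₁ hx₂ h₁ h₂)]

/-- Single-crossing claim: if `p_i` is lower than `p_j`, lies to the left of a
connected portion `T'` of the terrain, and sees every point of `T'`, then the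
perpendicular bisector of `p_i` and `p_j` meets `T'` at most once. -/
theorem bisector_single_crossing (f : ℝ → ℝ) (hf : Continuous f)
    (xi xj : ℝ) (hy : f xi < f xj)
    (I : Set ℝ) (hI : I.OrdConnected)
    (hleft : ∀ x ∈ I, xi < x)
    (hvis : ∀ x ∈ I, sees f (xi, f xi) (x, f x)) :
    Set.Subsingleton {q : ℝ × ℝ | q.1 ∈ I ∧ q.2 = f q.1 ∧
      edist2 q (xi, f xi) = edist2 q (xj, f xj)} :=
  bisector_single_crossing_general f xi xj hy I hleft hvis
end

section
/- Let T be a 1.5D terrain given by a continuous function f : ℝ → ℝ, and let p_i, p_j be points on T with y(p_i) < y(p_j). Then among all points q on T with x(q) > x(p_i) that lie on the perpendicular bisector of p_i and p_j and are visible from both p_i and p_j, only the one with smallest x-coordinate can exist; i.e., if q₁ and q₂ are two such points with x(q₁) < x(q₂), a contradiction follows. Formally: there do not exist q₁, q₂ on T with x(p_i) < x(q₁) < x(q₂), both on the bisector of p_i and p_j, with q₂ visible from p_i. -/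
def bisectorGap (a b p : ℝ × ℝ) : ℝ :=
  (p.1 - a.1) ^ 2 + (p.2 - a.2) ^ 2 - ((p.1 - b.1) ^ 2 + (p.2 - b.2) ^ 2)

theorem edist2_eq_edist2_iff_s11 {p a b : ℝ × ℝ} :
    edist2 p a = edist2 p b ↔ bisectorGap a b p = 0 := by
  rw [edist2, edist2, Real.sqrt_inj (by positivity) (by positivity), bisectorGap, sub_eq_zero]

theorem bisectorGap_segment (a b p q : ℝ × ℝ) (t : ℝ) :
    bisectorGap a b ((1 - t) * p.1 + t * q.1, (1 - t) * p.2 + t * q.2) =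
      (1 - t) * bisectorGap a b p + t * bisectorGap a b q := by
  simp only [bisectorGap]
  ring

theorem bisectorGap_self_neg {a b : ℝ × ℝ} (h : a ≠ b) : bisectorGap a b a < 0 := by
  have hpos : 0 < (a.1 - b.1) ^ 2 + (a.2 - b.2) ^ 2 := by
    obtain h₁ | h₂ : a.1 ≠ b.1 ∨ a.2 ≠ b.2 := by
      contrapose! h
      exact Prod.ext h.1 h.2
    · linarith [sq_pos_of_ne_zero (sub_ne_zero.mpr h₁), sq_nonneg (a.2 - b.2)]
    · linarith [sq_pos_of_ne_zero (sub_ne_zero.mpr h₂), sq_nonneg (a.1 - b.1)]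
  simp only [bisectorGap, sub_self]
  linarith

theorem bisectorGap_monotone_snd {a b : ℝ × ℝ} (h : a.2 ≤ b.2) (x : ℝ) :
    Monotone fun y => bisectorGap a b (x, y) := by
  intro y y' hy
  simp only [bisectorGap]
  nlinarith

theorem exists_mem_Ico_convex_comb_eq {a x b : ℝ} (hax : a ≤ x) (hxb : x < b) :
    ∃ t ∈ Set.Ico (0 : ℝ) 1, (1 - t) * a + t * b = x := by
  have hab : 0 < b - a := by linarith
  refine ⟨(x - a) / (b - a), ⟨by positivity, (div_lt_one hab).mpr (by linarith)⟩, ?_⟩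
  field_simp
  ring

theorem no_second_bisector_event_general (f : ℝ → ℝ)
    (xi xj : ℝ) (hy : f xi < f xj) :
    ¬ ∃ x₁ x₂ : ℝ, xi < x₁ ∧ x₁ < x₂ ∧
      edist2 (x₁, f x₁) (xi, f xi) = edist2 (x₁, f x₁) (xj, f xj) ∧
      edist2 (x₂, f x₂) (xi, f xi) = edist2 (x₂, f x₂) (xj, f xj) ∧
      sees f (xi, f xi) (x₂, f x₂) := by
  rintro ⟨x₁, x₂, hi₁, h₁₂, hq₁, hq₂, hsees⟩
  rw [edist2_eq_edist2_iff_s11] at hq₁ hq₂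
  obtain ⟨t, ⟨ht₀, ht₁⟩, hx₁⟩ := exists_mem_Ico_convex_comb_eq hi₁.le h₁₂
  have hne : ((xi, f xi) : ℝ × ℝ) ≠ (xj, f xj) := fun h => hy.ne (congrArg Prod.snd h)
  have hchord_below :
      bisectorGap (xi, f xi) (xj, f xj) (x₁, (1 - t) * f xi + t * f x₂) < 0 := by
    rw [← hx₁, bisectorGap_segment _ _ (xi, f xi) (x₂, f x₂), hq₂, mul_zero, add_zero]
    exact mul_neg_of_pos_of_neg (by linarith) (bisectorGap_self_neg hne)
  have hchord_above : f x₁ ≤ (1 - t) * f xi + t * f x₂ := by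
    simpa only [hx₁] using hsees t ⟨ht₀, ht₁.le⟩
  exact lt_irrefl (0 : ℝ) <| calc
    0 = bisectorGap (xi, f xi) (xj, f xj) (x₁, f x₁) := hq₁.symm
    _ ≤ bisectorGap (xi, f xi) (xj, f xj) (x₁, (1 - t) * f xi + t * f x₂) :=
      bisectorGap_monotone_snd hy.le x₁ hchord_above
    _ < 0 := hchord_below

/-- To the right of `p_i`, only the leftmost bisector-terrain intersection can
be visible from `p_i`. -/
theorem no_second_bisector_event (f : ℝ → ℝ) (hf : Continuous f)
    (xi xj : ℝ) (hy : f xi < f xj) :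
    ¬ ∃ x₁ x₂ : ℝ, xi < x₁ ∧ x₁ < x₂ ∧
      edist2 (x₁, f x₁) (xi, f xi) = edist2 (x₁, f x₁) (xj, f xj) ∧
      edist2 (x₂, f x₂) (xi, f xi) = edist2 (x₂, f x₂) (xj, f xj) ∧
      sees f (xi, f xi) (x₂, f x₂) :=
  no_second_bisector_event_general f xi xj hy
end
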